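/- (Ergodic gap bound.) In addition to the hypotheses of the telescoped one-iteration bound (w_{ij} = 1 for j ≥ i, U := W − euᵀ symmetric, β ≥ ρ > 0, α ≥ 1, and {(x^k, λ^k)}_{k≥1} generated by the algorithm), assume P̂ := P − D_Hᵀ((W − euᵀ + αuuᵀ) ⊗ I)D_H − β D_Aᵀ((W − euᵀ + αuuᵀ) ⊗ I)D_A is positive semidefinite, and let x* satisfy Ax* = b. Define x̄^{t+1} := (1/t) Σ_{k=1}^t x^{k+1}. Then for every λ ∈ ℝ^p: F(x̄^{t+1}) − F(x*) − ⟨λ, Ax̄^{t+1} − b⟩ ≤ (1/(2t)) ((1/ρ)‖λ^1 − λ‖² + ‖x^1 − x*‖_P² − ‖y^1 − y*‖_V² − β‖z^1 − z*‖_V²). -/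

import Mathlib

open Matrix Finset Filter Topology

/-- For a block matrix `M = (M_1,…,M_m)` and a block vector `x = (x_1,…,x_m)`,
`blkMulVec M x = Σ_i M_i x_i` (i.e. `Mx` for the concatenated matrix/vector). -/
noncomputable def blkMulVec {m r : ℕ} {n : Fin m → ℕ}
    (M : ∀ i : Fin m, Matrix (Fin r) (Fin (n i)) ℝ)
    (x : ∀ i : Fin m, Fin (n i) → ℝ) : Fin r → ℝ :=
  ∑ i, M i *ᵥ x i

/-- The objective `F(x) = (1/2) xᵀQx + Σ_i g_i(x_i)` where `Q = HᵀH`,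
so `F(x) = (1/2)‖Hx‖² + Σ_i g_i(x_i)`. -/
noncomputable def Fobj {m q : ℕ} {n : Fin m → ℕ}
    (H : ∀ i : Fin m, Matrix (Fin q) (Fin (n i)) ℝ)
    (g : ∀ i : Fin m, (Fin (n i) → ℝ) → ℝ)
    (x : ∀ i : Fin m, Fin (n i) → ℝ) : ℝ :=
  (1 / 2) * (blkMulVec H x ⬝ᵥ blkMulVec H x) + ∑ i, g i (x i)

/-- `‖x‖_P²` for the block-diagonal matrix `P = blkdiag(P_1,…,P_m)`:
`‖x‖_P² = Σ_i x_iᵀ P_i x_i`. -/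
noncomputable def normPSq {m : ℕ} {n : Fin m → ℕ}
    (P : ∀ i : Fin m, Matrix (Fin (n i)) (Fin (n i)) ℝ)
    (x : ∀ i : Fin m, Fin (n i) → ℝ) : ℝ :=
  ∑ i, x i ⬝ᵥ (P i *ᵥ x i)

/-- `‖y‖_V²` for a block vector `y = (y_1,…,y_m)`, where `V = U ⊗ I` with
`U := W − euᵀ` (so `U_{ij} = W_{ij} − u_j`): `‖y‖_V² = Σ_{i,j} U_{ij} ⟨y_i, y_j⟩`. -/
noncomputable def normVSq {m r : ℕ} (W : Matrix (Fin m) (Fin m) ℝ) (u : Fin m → ℝ)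
    (y : Fin m → Fin r → ℝ) : ℝ :=
  ∑ i, ∑ j, (W i j - u j) * (y i ⬝ᵥ y j)

/-- The quadratic form `v ↦ vᵀ D_Bᵀ (M ⊗ I) D_B v = Σ_{i,j} M_{ij} ⟨B_i v_i, B_j v_j⟩`
for a block-diagonal matrix `D_B = blkdiag(B_1,…,B_m)` and `M ∈ ℝ^{m×m}`. -/
noncomputable def quadKron {m r : ℕ} {n : Fin m → ℕ} (M : Matrix (Fin m) (Fin m) ℝ)
    (B : ∀ i : Fin m, Matrix (Fin r) (Fin (n i)) ℝ)
    (v : ∀ i : Fin m, Fin (n i) → ℝ) : ℝ :=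
  ∑ i, ∑ j, M i j * ((B i *ᵥ v i) ⬝ᵥ (B j *ᵥ v j))

/-- The point `x̂^{k,i}` with blocks `x̂_j^{k,i} = x_j^{k+1} − w_{ij}(x_j^{k+1} − x_j^k)`. -/
noncomputable def xhat {m : ℕ} {n : Fin m → ℕ} (W : Matrix (Fin m) (Fin m) ℝ)
    (xk xk1 : ∀ i : Fin m, Fin (n i) → ℝ) (i : Fin m) :
    ∀ j : Fin m, Fin (n j) → ℝ :=
  fun j => xk1 j - W i j • (xk1 j - xk j)

/-- One iteration of the hybrid Jacobian/Gauss-Seidel proximal BCU method: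
for each `i`, `x_i^{k+1}` minimizes
`⟨∇_i f(x̂^{k,i}) − A_iᵀ(λ^k − β(Ax̂^{k,i} − b)), x_i⟩ + g_i(x_i) + (1/2)‖x_i − x_i^k‖_{P_i}²`
(where `f(x) = (1/2)‖Hx‖²`, so `∇_i f(x̂) = H_iᵀ(Hx̂)`), and
`λ^{k+1} = λ^k − ρ(Ax^{k+1} − b)`. -/
noncomputable def Iter {m q p : ℕ} {n : Fin m → ℕ}
    (H : ∀ i : Fin m, Matrix (Fin q) (Fin (n i)) ℝ)
    (A : ∀ i : Fin m, Matrix (Fin p) (Fin (n i)) ℝ)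
    (b : Fin p → ℝ)
    (g : ∀ i : Fin m, (Fin (n i) → ℝ) → ℝ)
    (P : ∀ i : Fin m, Matrix (Fin (n i)) (Fin (n i)) ℝ)
    (W : Matrix (Fin m) (Fin m) ℝ)
    (β ρ : ℝ)
    (xk xk1 : ∀ i : Fin m, Fin (n i) → ℝ)
    (lamk lamk1 : Fin p → ℝ) : Prop :=
  (∀ i : Fin m, ∀ ξ : Fin (n i) → ℝ,
      ((H i)ᵀ *ᵥ blkMulVec H (xhat W xk xk1 i)
          - (A i)ᵀ *ᵥ (lamk - β • (blkMulVec A (xhat W xk xk1 i) - b))) ⬝ᵥ xk1 i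
        + g i (xk1 i)
        + (1 / 2) * ((xk1 i - xk i) ⬝ᵥ (P i *ᵥ (xk1 i - xk i)))
      ≤ ((H i)ᵀ *ᵥ blkMulVec H (xhat W xk xk1 i)
          - (A i)ᵀ *ᵥ (lamk - β • (blkMulVec A (xhat W xk xk1 i) - b))) ⬝ᵥ ξ
        + g i ξ
        + (1 / 2) * ((ξ - xk i) ⬝ᵥ (P i *ᵥ (ξ - xk i))))
  ∧ lamk1 = lamk - ρ • (blkMulVec A xk1 - b)


/-!
Each block update is a proximal step, so convexity of `gᵢ` turns its optimality condition into a
subgradient inequality tested at `x*`. Summing over the blocks and splitting `W = U + euᵀ`, the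
Gauss-Seidel cross terms telescope in the `U`-seminorm up to a rank-one remainder, which Young's
inequality (`α ≥ 1`) and `β ≥ ρ` absorb into `P̂ ⪰ 0`. This gives
`gap(x^{k+1}) ≤ Ψ_k - Ψ_{k+1}` for
`Ψ_k = (1/2ρ)‖λ^k - λ‖² + ½(‖x^k - x*‖²_P - ‖y^k - y*‖²_V - β‖z^k - z*‖²_V)`,
and `Ψ ≥ 0` again because `P̂ ⪰ 0`. The gap `x ↦ F(x) - F(x*) - ⟨λ, Ax - b⟩` is convex, so
Jensen's inequality and telescoping give the bound for the ergodic average.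
-/

section DotProduct

variable {κ : Type*} [Fintype κ]

lemma dotProduct_self_nonneg (v : κ → ℝ) : 0 ≤ v ⬝ᵥ v :=
  Finset.sum_nonneg fun i _ => mul_self_nonneg (v i)

lemma dotProduct_le_of_one_le {α : ℝ} (hα : 1 ≤ α) (v w : κ → ℝ) :
    v ⬝ᵥ w ≤ α / 2 * (v ⬝ᵥ v) + 1 / 2 * (w ⬝ᵥ w) := by
  have hvw := dotProduct_self_nonneg (v - w)
  simp only [sub_dotProduct, dotProduct_sub, dotProduct_comm w v] at hvw
  nlinarith [dotProduct_self_nonneg v]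

lemma dotProduct_eq_of_sub_smul {ρ : ℝ} (hρ : ρ ≠ 0) (v w : κ → ℝ) :
    v ⬝ᵥ w = 1 / (2 * ρ) * (v ⬝ᵥ v - (v - ρ • w) ⬝ᵥ (v - ρ • w)) + ρ / 2 * (w ⬝ᵥ w) := by
  simp only [sub_dotProduct, dotProduct_sub, smul_dotProduct, dotProduct_smul, smul_eq_mul,
    dotProduct_comm w v]
  field_simp
  ring

lemma convexOn_dotProduct_self : ConvexOn ℝ Set.univ fun v : κ → ℝ => v ⬝ᵥ v :=
  ⟨convex_univ, fun v _ w _ a b ha hb hab => by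
    have hmix := dotProduct_self_nonneg (v - w)
    simp only [sub_dotProduct, dotProduct_sub, add_dotProduct, dotProduct_add, smul_dotProduct,
      dotProduct_smul, smul_eq_mul, dotProduct_comm w v] at hmix ⊢
    have hb' : b = 1 - a := by linarith
    subst hb'
    nlinarith [mul_nonneg ha hb]⟩

lemma dotProduct_mulVec_three_point {P : Matrix κ κ ℝ} (hP : Pᵀ = P) (a o c : κ → ℝ) :
    (a - o) ⬝ᵥ (P *ᵥ (c - a))
      = 1 / 2 * ((o - c) ⬝ᵥ (P *ᵥ (o - c)) - (a - c) ⬝ᵥ (P *ᵥ (a - c))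
        - (a - o) ⬝ᵥ (P *ᵥ (a - o))) := by
  have hcomm : ∀ v w : κ → ℝ, v ⬝ᵥ (P *ᵥ w) = w ⬝ᵥ (P *ᵥ v) := fun v w => by
    rw [← dotProduct_transpose_mulVec, hP]
  simp only [mulVec_sub, sub_dotProduct, dotProduct_sub, hcomm o a, hcomm c a, hcomm c o]
  ring

lemma transpose_mulVec_dotProduct {κ' : Type*} [Fintype κ'] (B : Matrix κ κ' ℝ) (w : κ → ℝ)
    (v : κ' → ℝ) : (Bᵀ *ᵥ w) ⬝ᵥ v = w ⬝ᵥ (B *ᵥ v) := by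
  rw [mulVec_transpose, dotProduct_mulVec]

end DotProduct

lemma convexOn_univ_sum_apply {ι : Type*} [Fintype ι] {E : ι → Type*}
    [∀ i, AddCommGroup (E i)] [∀ i, Module ℝ (E i)] {f : ∀ i, E i → ℝ}
    (hf : ∀ i, ConvexOn ℝ Set.univ (f i)) :
    ConvexOn ℝ Set.univ fun x : ∀ i, E i => ∑ i, f i (x i) :=
  ⟨convex_univ, fun x _ y _ a b ha hb hab => by
    simp only [Pi.add_apply, Pi.smul_apply, smul_eq_mul, Finset.mul_sum, ← Finset.sum_add_distrib]
    exact Finset.sum_le_sum fun i _ => (hf i).2 trivial trivial ha hb hab⟩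

lemma le_of_forall_le_add_mul {x y c : ℝ} (h : ∀ τ : ℝ, 0 < τ → τ ≤ 1 → x ≤ y + τ * c) :
    x ≤ y := by
  have hlim : Tendsto (fun τ : ℝ => y + τ * c) (𝓝[>] 0) (𝓝 y) := by
    have hcont : Continuous fun τ : ℝ => y + τ * c := by fun_prop
    exact (hcont.tendsto' 0 y (by simp)).mono_left nhdsWithin_le_nhds
  refine ge_of_tendsto hlim ?_
  filter_upwards [Ioc_mem_nhdsGT zero_lt_one] with τ hτ using h τ hτ.1 hτ.2

lemma ConvexOn.map_average_le_of_le_sub {E : Type*} [AddCommGroup E] [Module ℝ E]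
    {φ : E → ℝ} (hφ : ConvexOn ℝ Set.univ φ) {x : ℕ → E} {Ψ : ℕ → ℝ} {t : ℕ} (ht : 1 ≤ t)
    (hdecrease : ∀ k ∈ Finset.Icc 1 t, φ (x (k + 1)) ≤ Ψ k - Ψ (k + 1)) (hΨ : 0 ≤ Ψ (t + 1)) :
    φ (∑ k ∈ Finset.Icc 1 t, (1 / (t : ℝ)) • x (k + 1)) ≤ Ψ 1 / t := by
  have htpos : (0 : ℝ) < t := by exact_mod_cast ht
  have htelescope : ∑ k ∈ Finset.Icc 1 t, (Ψ k - Ψ (k + 1)) = Ψ 1 - Ψ (t + 1) := by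
    simpa using congrArg Neg.neg (Finset.sum_Icc_sub ht Ψ)
  calc φ (∑ k ∈ Finset.Icc 1 t, (1 / (t : ℝ)) • x (k + 1))
      ≤ ∑ k ∈ Finset.Icc 1 t, (1 / (t : ℝ)) • φ (x (k + 1)) :=
        hφ.map_sum_le (fun _ _ => by positivity) (by simp [htpos.ne']) fun _ _ => trivial
    _ ≤ ∑ k ∈ Finset.Icc 1 t, (1 / (t : ℝ)) * (Ψ k - Ψ (k + 1)) :=
        Finset.sum_le_sum fun k hk => mul_le_mul_of_nonneg_left (hdecrease k hk) (by positivity)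
    _ ≤ Ψ 1 / t := by
        rw [← Finset.mul_sum, htelescope, one_div_mul_eq_div]
        gcongr
        linarith

/-- `c + P (a - o)` is a subgradient of `φ` at the proximal point `a`: compare `a` with the
points `a + τ (z - a)` and let `τ → 0⁺`. -/
lemma prox_subgradient_le {κ : Type*} [Fintype κ] {φ : (κ → ℝ) → ℝ}
    (hφ : ConvexOn ℝ Set.univ φ) {P : Matrix κ κ ℝ} (hP : P.PosSemidef) {c a o : κ → ℝ}
    (hmin : ∀ ξ, c ⬝ᵥ a + φ a + 1 / 2 * ((a - o) ⬝ᵥ (P *ᵥ (a - o)))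
        ≤ c ⬝ᵥ ξ + φ ξ + 1 / 2 * ((ξ - o) ⬝ᵥ (P *ᵥ (ξ - o)))) (z : κ → ℝ) :
    c ⬝ᵥ (a - z) + φ a - φ z ≤ (a - o) ⬝ᵥ (P *ᵥ (z - a)) := by
  have hcomm : (z - a) ⬝ᵥ (P *ᵥ (a - o)) = (a - o) ⬝ᵥ (P *ᵥ (z - a)) := by
    rw [← dotProduct_transpose_mulVec, show Pᵀ = P from hP.1]
  refine le_of_forall_le_add_mul (c := ((z - a) ⬝ᵥ (P *ᵥ (z - a))) / 2) fun τ hτ hτ1 => ?_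
  have hconv : φ (a + τ • (z - a)) ≤ (1 - τ) * φ a + τ * φ z := by
    have hmix : a + τ • (z - a) = (1 - τ) • a + τ • z := by
      rw [smul_sub, sub_smul, one_smul]; abel
    rw [hmix]
    exact hφ.2 trivial trivial (sub_nonneg.2 hτ1) hτ.le (sub_add_cancel 1 τ)
  have hstep := hmin (a + τ • (z - a))
  rw [add_sub_right_comm, mulVec_add, mulVec_smul] at hstep
  simp only [dotProduct_add, add_dotProduct, dotProduct_smul, smul_dotProduct, smul_eq_mul,
    hcomm] at hstep
  have hz : c ⬝ᵥ (z - a) = -(c ⬝ᵥ (a - z)) := by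
    rw [← dotProduct_neg, neg_sub]
  rw [hz] at hstep
  have hscaled : τ * (c ⬝ᵥ (a - z) + φ a - φ z)
      ≤ τ * ((a - o) ⬝ᵥ (P *ᵥ (z - a)) + τ * ((z - a) ⬝ᵥ (P *ᵥ (z - a)) / 2)) := by
    linarith
  exact le_of_mul_le_mul_left hscaled hτ

section KronForm

variable {ι κ : Type*} [Fintype ι] [Fintype κ]

/-- `aᵀ (M ⊗ I) b` for block vectors `a`, `b`. -/
noncomputable def kronForm (M : Matrix ι ι ℝ) (a b : ι → κ → ℝ) : ℝ :=
  ∑ i, ∑ j, M i j * (a i ⬝ᵥ b j)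

lemma kronForm_eq_sum_dotProduct (M : Matrix ι ι ℝ) (a b : ι → κ → ℝ) :
    kronForm M a b = ∑ i, a i ⬝ᵥ ∑ j, M i j • b j := by
  simp only [kronForm, dotProduct_sum, dotProduct_smul, smul_eq_mul]

lemma sum_sum_smul_dotProduct_eq_kronForm (M : Matrix ι ι ℝ) (a b : ι → κ → ℝ) :
    ∑ i, (∑ j, M i j • b j) ⬝ᵥ a i = kronForm M a b := by
  simp only [kronForm_eq_sum_dotProduct, dotProduct_comm]

lemma kronForm_sub_left (M : Matrix ι ι ℝ) (a a' b : ι → κ → ℝ) :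
    kronForm M (a - a') b = kronForm M a b - kronForm M a' b := by
  simp only [kronForm, Pi.sub_apply, sub_dotProduct, mul_sub, Finset.sum_sub_distrib]

lemma kronForm_sub_right (M : Matrix ι ι ℝ) (a b b' : ι → κ → ℝ) :
    kronForm M a (b - b') = kronForm M a b - kronForm M a b' := by
  simp only [kronForm, Pi.sub_apply, dotProduct_sub, mul_sub, Finset.sum_sub_distrib]

lemma kronForm_comm {M : Matrix ι ι ℝ} (hM : ∀ i j, M i j = M j i) (a b : ι → κ → ℝ) :
    kronForm M a b = kronForm M b a := by
  rw [kronForm, Finset.sum_comm]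
  simp only [kronForm, hM, dotProduct_comm]

lemma kronForm_polar {M : Matrix ι ι ℝ} (hM : ∀ i j, M i j = M j i) (a c : ι → κ → ℝ) :
    kronForm M a (a - c)
      = 1 / 2 * (kronForm M a a - kronForm M c c + kronForm M (a - c) (a - c)) := by
  simp only [kronForm_sub_left, kronForm_sub_right, kronForm_comm hM c a]
  ring

lemma kronForm_add_rankOne (M : Matrix ι ι ℝ) (c d : ι → ℝ) (a b : ι → κ → ℝ) :
    kronForm (fun i j => M i j + c i * d j) a b
      = kronForm M a b + (∑ i, c i • a i) ⬝ᵥ ∑ j, d j • b j := by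
  simp only [kronForm, sum_dotProduct, dotProduct_sum, smul_dotProduct, dotProduct_smul,
    smul_eq_mul, add_mul, Finset.sum_add_distrib, Finset.mul_sum]
  rw [Finset.sum_comm (f := fun i j => d i * (c j * (a j ⬝ᵥ b i)))]
  congr 1
  exact Finset.sum_congr rfl fun i _ => Finset.sum_congr rfl fun j _ => by ring

lemma kronForm_eq_sub_rankOne (W : Matrix ι ι ℝ) (u : ι → ℝ) (a b : ι → κ → ℝ) :
    kronForm W a b
      = kronForm (fun i j => W i j - u j) a b + (∑ i, a i) ⬝ᵥ ∑ j, u j • b j := by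
  simpa using kronForm_add_rankOne (fun i j => W i j - u j) 1 u a b

lemma kronForm_add_smul_rankOne (M : Matrix ι ι ℝ) (u : ι → ℝ) (α : ℝ) (a : ι → κ → ℝ) :
    kronForm (fun i j => M i j + α * (u i * u j)) a a
      = kronForm M a a + α * ((∑ i, u i • a i) ⬝ᵥ ∑ j, u j • a j) := by
  have h := kronForm_add_rankOne M (α • u) u a a
  simp only [Pi.smul_apply, smul_eq_mul, mul_assoc, ← smul_smul, ← Finset.smul_sum,
    smul_dotProduct] at h
  exact h

/-- Split `W = U + euᵀ`: polarization handles the `U` part, and Young's inequality absorbs the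
rank-one part against `½‖Σᵢ aᵢ‖²`. -/
lemma kronForm_sub_le {W : Matrix ι ι ℝ} {u : ι → ℝ} (hU : ∀ i j, W i j - u j = W j i - u i)
    {α : ℝ} (hα : 1 ≤ α) (a c : ι → κ → ℝ) :
    kronForm W a (a - c) - 1 / 2 * ((∑ i, a i) ⬝ᵥ ∑ i, a i)
      ≤ 1 / 2 * (kronForm (fun i j => W i j - u j) a a - kronForm (fun i j => W i j - u j) c c
          + kronForm (fun i j => W i j - u j + α * (u i * u j)) (a - c) (a - c)) := by
  rw [kronForm_eq_sub_rankOne W u, kronForm_polar hU,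
    kronForm_add_smul_rankOne (fun i j => W i j - u j) u α (a - c)]
  have hyoung := dotProduct_le_of_one_le hα (∑ j, u j • (a - c) j) (∑ i, a i)
  rw [dotProduct_comm] at hyoung
  linarith

end KronForm

section BlockIteration

variable {m q p : ℕ} {n : Fin m → ℕ}

/-- `D_B v` for `D_B = blkdiag(B₁,…,B_m)`. -/
def blockDiagMulVec {r : ℕ} (B : ∀ i : Fin m, Matrix (Fin r) (Fin (n i)) ℝ)
    (v : ∀ i : Fin m, Fin (n i) → ℝ) : Fin m → Fin r → ℝ :=
  fun i => B i *ᵥ v i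

lemma blockDiagMulVec_sub {r : ℕ} (B : ∀ i : Fin m, Matrix (Fin r) (Fin (n i)) ℝ)
    (v w : ∀ i : Fin m, Fin (n i) → ℝ) :
    blockDiagMulVec B (v - w) = blockDiagMulVec B v - blockDiagMulVec B w :=
  funext fun i => mulVec_sub (B i) (v i) (w i)

noncomputable def blkMulVecLin {r : ℕ} (B : ∀ i : Fin m, Matrix (Fin r) (Fin (n i)) ℝ) :
    (∀ i : Fin m, Fin (n i) → ℝ) →ₗ[ℝ] Fin r → ℝ :=
  ∑ i, (B i).mulVecLin ∘ₗ LinearMap.proj i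

lemma blkMulVecLin_apply {r : ℕ} (B : ∀ i : Fin m, Matrix (Fin r) (Fin (n i)) ℝ)
    (v : ∀ i : Fin m, Fin (n i) → ℝ) : blkMulVecLin B v = blkMulVec B v := by
  simp [blkMulVecLin, blkMulVec]

lemma blkMulVec_sub {r : ℕ} (B : ∀ i : Fin m, Matrix (Fin r) (Fin (n i)) ℝ)
    (v w : ∀ i : Fin m, Fin (n i) → ℝ) : blkMulVec B (v - w) = blkMulVec B v - blkMulVec B w := by
  simp only [← blkMulVecLin_apply, map_sub]

lemma blkMulVec_xhat {r : ℕ} (B : ∀ i : Fin m, Matrix (Fin r) (Fin (n i)) ℝ)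
    (W : Matrix (Fin m) (Fin m) ℝ) (o a : ∀ i : Fin m, Fin (n i) → ℝ) (i : Fin m) :
    blkMulVec B (xhat W o a i) = blkMulVec B a - ∑ j, W i j • blockDiagMulVec B (a - o) j := by
  simp only [blkMulVec, xhat, blockDiagMulVec, mulVec_sub, mulVec_smul, Pi.sub_apply,
    Finset.sum_sub_distrib]

lemma convexOn_Fobj (H : ∀ i : Fin m, Matrix (Fin q) (Fin (n i)) ℝ)
    {g : ∀ i : Fin m, (Fin (n i) → ℝ) → ℝ} (hg : ∀ i, ConvexOn ℝ Set.univ (g i)) :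
    ConvexOn ℝ Set.univ (Fobj H g) := by
  have hquad := (convexOn_dotProduct_self.comp_linearMap (blkMulVecLin H)).smul
    (by norm_num : (0 : ℝ) ≤ 1 / 2)
  refine (hquad.add (convexOn_univ_sum_apply hg)).congr fun x _ => ?_
  simp [Fobj, blkMulVecLin_apply]

lemma convexOn_Fobj_sub_dotProduct (H : ∀ i : Fin m, Matrix (Fin q) (Fin (n i)) ℝ)
    (A : ∀ i : Fin m, Matrix (Fin p) (Fin (n i)) ℝ) (b : Fin p → ℝ)
    {g : ∀ i : Fin m, (Fin (n i) → ℝ) → ℝ} (hg : ∀ i, ConvexOn ℝ Set.univ (g i))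
    (c : ℝ) (lamv : Fin p → ℝ) :
    ConvexOn ℝ Set.univ fun x => Fobj H g x - c - lamv ⬝ᵥ (blkMulVec A x - b) := by
  have haff : ConcaveOn ℝ Set.univ fun x => c + lamv ⬝ᵥ (blkMulVec A x - b) := by
    refine (((dotProductBilin ℝ ℝ lamv ∘ₗ blkMulVecLin A).concaveOn convex_univ).add_const
      (c - lamv ⬝ᵥ b)).congr fun x _ => ?_
    simp only [LinearMap.comp_apply, dotProductBilin_apply_apply, blkMulVecLin_apply,
      Pi.add_apply, dotProduct_sub]
    ring
  refine ((convexOn_Fobj H hg).sub haff).congr fun x _ => ?_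
  simp only [Pi.sub_apply]
  ring

lemma Fobj_sub_Fobj (H : ∀ i : Fin m, Matrix (Fin q) (Fin (n i)) ℝ)
    (g : ∀ i : Fin m, (Fin (n i) → ℝ) → ℝ) (a xstar : ∀ i : Fin m, Fin (n i) → ℝ) :
    Fobj H g a - Fobj H g xstar
      = blkMulVec H a ⬝ᵥ blkMulVec H (a - xstar)
          - 1 / 2 * (blkMulVec H (a - xstar) ⬝ᵥ blkMulVec H (a - xstar))
          + ∑ i, (g i (a i) - g i (xstar i)) := by
  simp only [Fobj, blkMulVec_sub, sub_dotProduct, dotProduct_sub, Finset.sum_sub_distrib,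
    dotProduct_comm (blkMulVec H xstar) (blkMulVec H a)]
  ring

lemma sum_blockDiagMulVec {r : ℕ} (B : ∀ i : Fin m, Matrix (Fin r) (Fin (n i)) ℝ)
    (v : ∀ i : Fin m, Fin (n i) → ℝ) : ∑ i, blockDiagMulVec B v i = blkMulVec B v :=
  rfl

lemma normVSq_eq_kronForm {r : ℕ} (W : Matrix (Fin m) (Fin m) ℝ) (u : Fin m → ℝ)
    (y : Fin m → Fin r → ℝ) : normVSq W u y = kronForm (fun i j => W i j - u j) y y :=
  rfl

end BlockIteration

section OneIteration

variable {m q p : ℕ} {n : Fin m → ℕ}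
  {H : ∀ i : Fin m, Matrix (Fin q) (Fin (n i)) ℝ} {A : ∀ i : Fin m, Matrix (Fin p) (Fin (n i)) ℝ}
  {b : Fin p → ℝ} {g : ∀ i : Fin m, (Fin (n i) → ℝ) → ℝ}
  {P : ∀ i : Fin m, Matrix (Fin (n i)) (Fin (n i)) ℝ} {W : Matrix (Fin m) (Fin m) ℝ}
  {u : Fin m → ℝ} {α β ρ : ℝ} {o a xstar : ∀ i : Fin m, Fin (n i) → ℝ} {lk lk1 : Fin p → ℝ}

lemma Iter.gap_le (hg : ∀ i, ConvexOn ℝ Set.univ (g i)) (hP : ∀ i, (P i).PosSemidef)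
    (hfeas : blkMulVec A xstar = b) (hit : Iter H A b g P W β ρ o a lk lk1)
    (lamv : Fin p → ℝ) :
    Fobj H g a - Fobj H g xstar - lamv ⬝ᵥ (blkMulVec A a - b)
      ≤ (lk - lamv) ⬝ᵥ blkMulVec A (a - xstar)
        - β * (blkMulVec A (a - xstar) ⬝ᵥ blkMulVec A (a - xstar))
        - 1 / 2 * (blkMulVec H (a - xstar) ⬝ᵥ blkMulVec H (a - xstar))
        + kronForm W (blockDiagMulVec H (a - xstar)) (blockDiagMulVec H (a - o))
        + β * kronForm W (blockDiagMulVec A (a - xstar)) (blockDiagMulVec A (a - o))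
        + ∑ i, (a - o) i ⬝ᵥ (P i *ᵥ (xstar - a) i) := by
  have hres : blkMulVec A a - b = blkMulVec A (a - xstar) := by rw [blkMulVec_sub, hfeas]
  have hblock : ∀ i, (blkMulVec H a - ∑ j, W i j • blockDiagMulVec H (a - o) j)
        ⬝ᵥ blockDiagMulVec H (a - xstar) i
      - (lk - β • (blkMulVec A (a - xstar) - ∑ j, W i j • blockDiagMulVec A (a - o) j))
        ⬝ᵥ blockDiagMulVec A (a - xstar) i
      + (g i (a i) - g i (xstar i)) ≤ (a - o) i ⬝ᵥ (P i *ᵥ (xstar - a) i) := by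
    intro i
    have h := prox_subgradient_le (hg i) (hP i) (hit.1 i) (xstar i)
    rw [sub_dotProduct, transpose_mulVec_dotProduct, transpose_mulVec_dotProduct,
      blkMulVec_xhat, blkMulVec_xhat, sub_right_comm _ _ b, hres, add_sub_assoc] at h
    exact h
  have hsum := Finset.sum_le_sum fun i (_ : i ∈ Finset.univ) => hblock i
  simp only [sub_dotProduct, smul_dotProduct, smul_eq_mul, Finset.sum_add_distrib,
    Finset.sum_sub_distrib, ← Finset.mul_sum, ← dotProduct_sum,
    sum_sum_smul_dotProduct_eq_kronForm] at hsum
  rw [Fobj_sub_Fobj, hres, sub_dotProduct, Finset.sum_sub_distrib]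
  simp only [blkMulVec, blockDiagMulVec] at hsum ⊢
  linarith

variable (H A P W u β) in
noncomputable def lyapunov (d : ∀ i : Fin m, Fin (n i) → ℝ) : ℝ :=
  1 / 2 * (normPSq P d - normVSq W u (blockDiagMulVec H d)
    - β * normVSq W u (blockDiagMulVec A d))

lemma quadKron_add_smul_rankOne {r : ℕ} (B : ∀ i : Fin m, Matrix (Fin r) (Fin (n i)) ℝ)
    (v : ∀ i : Fin m, Fin (n i) → ℝ) :
    quadKron (fun i j => W i j - u j + α * (u i * u j)) B v
      = normVSq W u (blockDiagMulVec B v)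
        + α * ((∑ i, u i • blockDiagMulVec B v i) ⬝ᵥ ∑ j, u j • blockDiagMulVec B v j) :=
  kronForm_add_smul_rankOne _ u α _

lemma lyapunov_nonneg (hβ : 0 ≤ β) (hα : 0 ≤ α)
    (hPhat : ∀ v : ∀ i : Fin m, Fin (n i) → ℝ,
      0 ≤ normPSq P v - quadKron (fun i j => W i j - u j + α * (u i * u j)) H v
        - β * quadKron (fun i j => W i j - u j + α * (u i * u j)) A v)
    (d : ∀ i : Fin m, Fin (n i) → ℝ) : 0 ≤ lyapunov H A P W u β d := by
  have h := hPhat d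
  rw [quadKron_add_smul_rankOne, quadKron_add_smul_rankOne] at h
  unfold lyapunov
  nlinarith [mul_nonneg hα (dotProduct_self_nonneg (∑ i, u i • blockDiagMulVec H d i)),
    mul_nonneg hβ (mul_nonneg hα (dotProduct_self_nonneg (∑ i, u i • blockDiagMulVec A d i)))]

lemma sum_dotProduct_mulVec_eq_normPSq (hP : ∀ i, (P i).PosSemidef)
    (a o c : ∀ i : Fin m, Fin (n i) → ℝ) :
    ∑ i, (a - o) i ⬝ᵥ (P i *ᵥ (c - a) i)
      = 1 / 2 * (normPSq P (o - c) - normPSq P (a - c) - normPSq P (a - o)) := by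
  simp only [normPSq, ← Finset.sum_sub_distrib, Finset.mul_sum]
  exact Finset.sum_congr rfl fun i _ => dotProduct_mulVec_three_point (hP i).1 _ _ _

lemma Iter.gap_le_lyapunov_sub (hg : ∀ i, ConvexOn ℝ Set.univ (g i))
    (hP : ∀ i, (P i).PosSemidef) (hU : ∀ i j, W i j - u j = W j i - u i)
    (hρ : 0 < ρ) (hβρ : ρ ≤ β) (hα : 1 ≤ α)
    (hPhat : ∀ v : ∀ i : Fin m, Fin (n i) → ℝ,
      0 ≤ normPSq P v - quadKron (fun i j => W i j - u j + α * (u i * u j)) H v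
        - β * quadKron (fun i j => W i j - u j + α * (u i * u j)) A v)
    (hfeas : blkMulVec A xstar = b) (hit : Iter H A b g P W β ρ o a lk lk1) (lamv : Fin p → ℝ) :
    Fobj H g a - Fobj H g xstar - lamv ⬝ᵥ (blkMulVec A a - b)
      ≤ 1 / (2 * ρ) * ((lk - lamv) ⬝ᵥ (lk - lamv) - (lk1 - lamv) ⬝ᵥ (lk1 - lamv))
        + lyapunov H A P W u β (o - xstar) - lyapunov H A P W u β (a - xstar) := by
  have hincr : ∀ {r : ℕ} (B : ∀ i : Fin m, Matrix (Fin r) (Fin (n i)) ℝ),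
      blockDiagMulVec B (a - xstar) - blockDiagMulVec B (o - xstar) = blockDiagMulVec B (a - o) :=
    fun B => by rw [← blockDiagMulVec_sub, sub_sub_sub_cancel_right]
  have hgap := hit.gap_le hg hP hfeas lamv
  have hlam : lk1 - lamv = (lk - lamv) - ρ • blkMulVec A (a - xstar) := by
    rw [hit.2, ← hfeas, ← blkMulVec_sub]
    abel
  have hdual := dotProduct_eq_of_sub_smul hρ.ne' (lk - lamv) (blkMulVec A (a - xstar))
  rw [← hlam] at hdual
  have hH := kronForm_sub_le hU hα (blockDiagMulVec H (a - xstar)) (blockDiagMulVec H (o - xstar))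
  have hA := kronForm_sub_le hU hα (blockDiagMulVec A (a - xstar)) (blockDiagMulVec A (o - xstar))
  rw [hincr, sum_blockDiagMulVec, kronForm_add_smul_rankOne (fun i j => W i j - u j) u α]
    at hH hA
  have hAβ := mul_le_mul_of_nonneg_left hA (hρ.le.trans hβρ)
  have hprox := sum_dotProduct_mulVec_eq_normPSq hP a o xstar
  have hPhat' := hPhat (a - o)
  rw [quadKron_add_smul_rankOne, quadKron_add_smul_rankOne] at hPhat'
  have hres := mul_nonneg (sub_nonneg.2 hβρ)
    (dotProduct_self_nonneg (blkMulVec A (a - xstar)))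
  simp only [lyapunov, normVSq_eq_kronForm] at hPhat' ⊢
  linarith

end OneIteration

theorem stmt_10_general {m q p : ℕ} {n : Fin m → ℕ}
    (H : ∀ i : Fin m, Matrix (Fin q) (Fin (n i)) ℝ)
    (A : ∀ i : Fin m, Matrix (Fin p) (Fin (n i)) ℝ)
    (b : Fin p → ℝ)
    (g : ∀ i : Fin m, (Fin (n i) → ℝ) → ℝ)
    (hg : ∀ i : Fin m, ConvexOn ℝ Set.univ (g i))
    (P : ∀ i : Fin m, Matrix (Fin (n i)) (Fin (n i)) ℝ)
    (hP : ∀ i : Fin m, (P i).PosSemidef)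
    (W : Matrix (Fin m) (Fin m) ℝ) (u : Fin m → ℝ)
    (hU : ∀ i j : Fin m, W i j - u j = W j i - u i)       -- U := W − euᵀ symmetric
    (β ρ α : ℝ) (hρ : 0 < ρ) (hβρ : ρ ≤ β) (hα : 1 ≤ α)
    (x : ℕ → ∀ i : Fin m, Fin (n i) → ℝ) (lam : ℕ → Fin p → ℝ)
    (hiter : ∀ k : ℕ, 1 ≤ k →
      Iter H A b g P W β ρ (x k) (x (k + 1)) (lam k) (lam (k + 1)))
    (Mhat : Matrix (Fin m) (Fin m) ℝ)
    (hM : Mhat = fun i j => W i j - u j + α * (u i * u j))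
    -- P̂ := P − D_Hᵀ(M ⊗ I)D_H − β D_Aᵀ(M ⊗ I)D_A is positive semidefinite:
    (hPhat : ∀ v : ∀ i : Fin m, Fin (n i) → ℝ,
      0 ≤ normPSq P v - quadKron Mhat H v - β * quadKron Mhat A v)
    (xstar : ∀ i : Fin m, Fin (n i) → ℝ) (hfeas : blkMulVec A xstar = b)
    (t : ℕ) (ht : 1 ≤ t)
    (xbar : ∀ i : Fin m, Fin (n i) → ℝ)
    (hxbar : xbar = fun i => (1 / (t : ℝ)) • ∑ k ∈ Finset.Icc 1 t, x (k + 1) i) :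
    ∀ lamv : Fin p → ℝ,
      Fobj H g xbar - Fobj H g xstar - lamv ⬝ᵥ (blkMulVec A xbar - b)
        ≤ (1 / (2 * t)) *
            ((1 / ρ) * ((lam 1 - lamv) ⬝ᵥ (lam 1 - lamv))
              + normPSq P (x 1 - xstar)
              - normVSq W u ((fun i => H i *ᵥ (x 1) i) - fun i => H i *ᵥ xstar i)
              - β * normVSq W u
                  ((fun i => A i *ᵥ (x 1) i) - fun i => A i *ᵥ xstar i)) := by
  intro lamv
  subst hM
  set Ψ : ℕ → ℝ := fun k => 1 / (2 * ρ) * ((lam k - lamv) ⬝ᵥ (lam k - lamv))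
    + lyapunov H A P W u β (x k - xstar) with hΨ
  have hdecrease : ∀ k ∈ Finset.Icc 1 t, Fobj H g (x (k + 1)) - Fobj H g xstar
      - lamv ⬝ᵥ (blkMulVec A (x (k + 1)) - b) ≤ Ψ k - Ψ (k + 1) := fun k hk => by
    have h := (hiter k (Finset.mem_Icc.1 hk).1).gap_le_lyapunov_sub hg hP hU hρ hβρ hα hPhat
      hfeas lamv
    simp only [hΨ]
    linarith
  have hΨ_nonneg : 0 ≤ Ψ (t + 1) :=
    add_nonneg (mul_nonneg (by positivity) (dotProduct_self_nonneg _))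
      (lyapunov_nonneg (hρ.le.trans hβρ) (by linarith) hPhat _)
  have hxbar_sum : xbar = ∑ k ∈ Finset.Icc 1 t, (1 / (t : ℝ)) • x (k + 1) := by
    rw [hxbar, ← Finset.smul_sum]
    funext i
    simp only [Pi.smul_apply, Finset.sum_apply]
  calc Fobj H g xbar - Fobj H g xstar - lamv ⬝ᵥ (blkMulVec A xbar - b) ≤ Ψ 1 / t := by
        rw [hxbar_sum]
        exact (convexOn_Fobj_sub_dotProduct H A b hg (Fobj H g xstar) lamv).map_average_le_of_le_sub
          ht hdecrease hΨ_nonneg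
    _ = _ := by
        simp only [hΨ, lyapunov, blockDiagMulVec_sub]
        unfold blockDiagMulVec
        field_simp
        ring

/-- Ergodic gap bound (inequality (22)): under the hypotheses of the telescoped
one-iteration bound, with `P̂ ⪰ 0` and feasible `x*`, for `x̄^{t+1} := (1/t)Σ_{k=1}^t x^{k+1}`
and every `λ`:
`F(x̄^{t+1}) − F(x*) − ⟨λ, Ax̄^{t+1} − b⟩
  ≤ (1/(2t))((1/ρ)‖λ¹ − λ‖² + ‖x¹ − x*‖_P² − ‖y¹ − y*‖_V² − β‖z¹ − z*‖_V²)`. -/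
theorem stmt_10 {m q p : ℕ} {n : Fin m → ℕ}
    (H : ∀ i : Fin m, Matrix (Fin q) (Fin (n i)) ℝ)
    (A : ∀ i : Fin m, Matrix (Fin p) (Fin (n i)) ℝ)
    (b : Fin p → ℝ)
    (g : ∀ i : Fin m, (Fin (n i) → ℝ) → ℝ)
    (hg : ∀ i : Fin m, ConvexOn ℝ Set.univ (g i))
    (P : ∀ i : Fin m, Matrix (Fin (n i)) (Fin (n i)) ℝ)
    (hP : ∀ i : Fin m, (P i).PosSemidef)
    (W : Matrix (Fin m) (Fin m) ℝ) (u : Fin m → ℝ)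
    (hW : ∀ i j : Fin m, i ≤ j → W i j = 1)              -- w_{ij} = 1 for j ≥ i
    (hU : ∀ i j : Fin m, W i j - u j = W j i - u i)       -- U := W − euᵀ symmetric
    (β ρ α : ℝ) (hρ : 0 < ρ) (hβρ : ρ ≤ β) (hα : 1 ≤ α)
    (x : ℕ → ∀ i : Fin m, Fin (n i) → ℝ) (lam : ℕ → Fin p → ℝ)
    (hiter : ∀ k : ℕ, 1 ≤ k →
      Iter H A b g P W β ρ (x k) (x (k + 1)) (lam k) (lam (k + 1)))
    (Mhat : Matrix (Fin m) (Fin m) ℝ)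
    (hM : Mhat = fun i j => W i j - u j + α * (u i * u j))
    -- P̂ := P − D_Hᵀ(M ⊗ I)D_H − β D_Aᵀ(M ⊗ I)D_A is positive semidefinite:
    (hPhat : ∀ v : ∀ i : Fin m, Fin (n i) → ℝ,
      0 ≤ normPSq P v - quadKron Mhat H v - β * quadKron Mhat A v)
    (xstar : ∀ i : Fin m, Fin (n i) → ℝ) (hfeas : blkMulVec A xstar = b)
    (t : ℕ) (ht : 1 ≤ t)
    (xbar : ∀ i : Fin m, Fin (n i) → ℝ)
    (hxbar : xbar = fun i => (1 / (t : ℝ)) • ∑ k ∈ Finset.Icc 1 t, x (k + 1) i) :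
    ∀ lamv : Fin p → ℝ,
      Fobj H g xbar - Fobj H g xstar - lamv ⬝ᵥ (blkMulVec A xbar - b)
        ≤ (1 / (2 * t)) *
            ((1 / ρ) * ((lam 1 - lamv) ⬝ᵥ (lam 1 - lamv))
              + normPSq P (x 1 - xstar)
              - normVSq W u ((fun i => H i *ᵥ (x 1) i) - fun i => H i *ᵥ xstar i)
              - β * normVSq W u
                  ((fun i => A i *ᵥ (x 1) i) - fun i => A i *ᵥ xstar i)) :=
  stmt_10_general H A b g hg P hP W u hU β ρ α hρ hβρ hα x lam hiter Mhat hM hPhat xstar hfeas t ht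
    xbar hxbar
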